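/- (Monotonicity in supply) Let all buyers have strong gross substitutes valuations and let b' ≤ b be two supply vectors. If p and p' are the minimal (resp. maximal) Walrasian price vectors for supplies b and b', then p(e) ≤ p'(e) for every item e with b'(e) > 0: decreasing the supply can only increase the minimal and maximal Walrasian prices on the remaining items. -/

import Mathlib

open Finset

variable {E : Type*} [Fintype E] [DecidableEq E]

/-- Characteristic (unit) vector of an item. -/
def chi (e : E) : E → ℤ := fun f => if f = e then 1 else 0

/-- The integer box `[0, b]_ℤ` of bundles. -/
def Box (b : E → ℤ) : Set (E → ℤ) := {z | ∀ e, 0 ≤ z e ∧ z e ≤ b e}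

/-- Quasi-linear utility of a bundle at prices `p`. -/
noncomputable def util (v : (E → ℤ) → ℤ) (p : E → ℝ) (z : E → ℤ) : ℝ :=
  (v z : ℝ) - ∑ e : E, p e * (z e : ℝ)

/-- Demand set: utility-maximizing bundles in the box. -/
def Demand (b : E → ℤ) (v : (E → ℤ) → ℤ) (p : E → ℝ) : Set (E → ℤ) :=
  {z | z ∈ Box b ∧ ∀ y ∈ Box b, util v p y ≤ util v p z}

/-- Componentwise minimal preferred bundles. -/
def MinDemand (b : E → ℤ) (v : (E → ℤ) → ℤ) (p : E → ℝ) : Set (E → ℤ) :=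
  {z | z ∈ Demand b v p ∧ ∀ y ∈ Demand b v p, y ≤ z → y = z}

/-- Componentwise maximal preferred bundles. -/
def MaxDemand (b : E → ℤ) (v : (E → ℤ) → ℤ) (p : E → ℝ) : Set (E → ℤ) :=
  {z | z ∈ Demand b v p ∧ ∀ y ∈ Demand b v p, z ≤ y → y = z}

/-- M♮-concavity, equivalent to the strong gross substitutes property. -/
def MNatConcave (b : E → ℤ) (v : (E → ℤ) → ℤ) : Prop :=
  ∀ x ∈ Box b, ∀ y ∈ Box b, ∀ e : E, y e < x e →
    v x + v y ≤ v (x - chi e) + v (y + chi e) ∨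
    ∃ f : E, x f < y f ∧ v x + v y ≤ v (x - chi e + chi f) + v (y + chi e - chi f)

/-- M-convex set: exchange property. -/
def MConvex (B : Set (E → ℤ)) : Prop :=
  ∀ x ∈ B, ∀ y ∈ B, ∀ e : E, y e < x e →
    ∃ f : E, x f < y f ∧ x - chi e + chi f ∈ B ∧ y + chi e - chi f ∈ B

/-- `ρ` is the rank function of `B`: `ρ S = max {z(S) : z ∈ B}`. -/
def IsRank (B : Set (E → ℤ)) (ρ : Finset E → ℤ) : Prop :=
  ∀ S : Finset E, IsGreatest ((fun z : E → ℤ => ∑ e ∈ S, z e) '' B) (ρ S)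

/-- Prices `p` are packing: a choice of preferred bundles oversells no item. -/
def Packing {N : Type*} [Fintype N] (b : E → ℤ) (v : N → (E → ℤ) → ℤ) (p : E → ℝ) : Prop :=
  ∃ z : N → E → ℤ, (∀ i, z i ∈ Demand b (v i) p) ∧ ∀ e, ∑ i, z i e ≤ b e

/-- Prices `p` are covering: a choice of preferred bundles sells all items. -/
def Covering {N : Type*} [Fintype N] (b : E → ℤ) (v : N → (E → ℤ) → ℤ) (p : E → ℝ) : Prop :=
  ∃ z : N → E → ℤ, (∀ i, z i ∈ Demand b (v i) p) ∧ ∀ e, b e ≤ ∑ i, z i e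

/-- Prices `p` are Walrasian: a choice of preferred bundles exactly exhausts the supply. -/
def Walrasian {N : Type*} [Fintype N] (b : E → ℤ) (v : N → (E → ℤ) → ℤ) (p : E → ℝ) : Prop :=
  ∃ z : N → E → ℤ, (∀ i, z i ∈ Demand b (v i) p) ∧ ∀ e, ∑ i, z i e = b e

/-!
Let `p, p'` be Walrasian for the supplies `b ≥ b'`. Lowering `p` to `min p p'` on the items
that remain in supply gives prices still Walrasian for `b`, and raising `p'` to `max p p'` there
gives prices still Walrasian for `b'`; minimality of `p`, resp. maximality of `p'`, then gives
`p ≤ p'` on these items. To see that, say, `q = min p p'` is Walrasian, pick for every buyer a demanded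
bundle at `q` that is `ℓ¹`-closest to her bundle in the `b'`-equilibrium. If an item with
`q < p` were overdemanded, the M♮-exchange property between these two bundles would give a
demanded bundle that is closer still. So the price cut from `p` to `q` goes only to items
whose demand is at most the supply, and the old `b`-allocation remains optimal at `q`.
-/

section Exchange

variable {b b' : E → ℤ} {v : (E → ℤ) → ℤ} {x y z d : E → ℤ} {e : E}

omit [Fintype E] [DecidableEq E] in
lemma box_eq_Icc (b : E → ℤ) : Box b = Set.Icc 0 b := by
  ext z
  simp [Box, Pi.le_def, forall_and]

omit [Fintype E] [DecidableEq E] in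
lemma box_mono (hbb : b' ≤ b) : Box b' ⊆ Box b :=
  fun _ hz e => ⟨(hz e).1, (hz e).2.trans (hbb e)⟩

lemma demand_finite (b : E → ℤ) (v : (E → ℤ) → ℤ) (p : E → ℝ) : (Demand b v p).Finite :=
  (box_eq_Icc b ▸ Set.finite_Icc 0 b).subset fun _ hz => hz.1

lemma demand_nonempty (hb : 0 ≤ b) (v : (E → ℤ) → ℤ) (p : E → ℝ) :
    (Demand b v p).Nonempty := by
  obtain ⟨z, hz, hmax⟩ := Set.exists_max_image (Box b) (util v p)
    (box_eq_Icc b ▸ Set.finite_Icc 0 b) ⟨0, fun e => ⟨le_rfl, hb e⟩⟩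
  exact ⟨z, hz, hmax⟩

lemma sum_mul_chi (w : E → ℝ) (e : E) : ∑ k, w k * (chi e k : ℝ) = w e := by
  simp [chi]

def l1 (w : E → ℤ) : ℤ := ∑ e, |w e|

/-- The moves of M♮-concavity: `x` passes a unit of `e` to `y`, possibly receiving a unit of some
`g` in return. -/
def IsExchange (x y : E → ℤ) (e : E) (d : E → ℤ) : Prop :=
  d = chi e ∨ ∃ g, x g < y g ∧ d = chi e - chi g

omit [Fintype E] in
lemma MNatConcave.exists_exchange (hv : MNatConcave b v) (hx : x ∈ Box b) (hy : y ∈ Box b)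
    (he : y e < x e) : ∃ d, IsExchange x y e d ∧ v x + v y ≤ v (x - d) + v (y + d) := by
  rcases hv x hx y hy e he with h | ⟨g, hg, h⟩
  · exact ⟨chi e, .inl rfl, h⟩
  · refine ⟨chi e - chi g, .inr ⟨g, hg, rfl⟩, ?_⟩
    convert h using 3 <;> abel

omit [Fintype E] in
lemma IsExchange.mem_box (hd : IsExchange x y e d) (hbb : b' ≤ b) (hx : x ∈ Box b)
    (hy : y ∈ Box b') (he : y e < x e) (hyb : y e < b' e) :
    x - d ∈ Box b ∧ y + d ∈ Box b' := by
  have hxy : ∀ k, 0 ≤ x k ∧ x k ≤ b k ∧ 0 ≤ y k ∧ y k ≤ b' k ∧ b' k ≤ b k :=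
    fun k => ⟨(hx k).1, (hx k).2, (hy k).1, (hy k).2, hbb k⟩
  have hxye := hxy e
  rcases hd with rfl | ⟨g, hg, rfl⟩
  · refine ⟨fun k => ?_, fun k => ?_⟩ <;>
    · have := hxy k
      simp only [Pi.sub_apply, Pi.add_apply, chi]
      split_ifs <;> subst_vars <;> omega
  · have hxyg := hxy g
    refine ⟨fun k => ?_, fun k => ?_⟩ <;>
    · have := hxy k
      simp only [Pi.sub_apply, Pi.add_apply, chi]
      split_ifs <;> subst_vars <;> omega

lemma IsExchange.l1_lt (hd : IsExchange x y e d) (he : y e < x e) :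
    l1 (x - y - d) < l1 (x - y) := by
  rcases hd with rfl | ⟨g, hg, rfl⟩
  · refine Finset.sum_lt_sum (fun k _ => ?_) ⟨e, mem_univ e, ?_⟩ <;>
    · simp only [Pi.sub_apply, chi]
      split_ifs <;> subst_vars <;> grind
  · refine Finset.sum_lt_sum (fun k _ => ?_) ⟨e, mem_univ e, ?_⟩ <;>
    · simp only [Pi.sub_apply, chi]
      split_ifs <;> subst_vars <;> grind

lemma IsExchange.sum_price_nonneg (hd : IsExchange x y e d) {P Q : E → ℝ} (he : Q e ≤ P e)
    (hg : ∀ g, x g < y g → P g ≤ Q g) : 0 ≤ ∑ k, (P k - Q k) * (d k : ℝ) := by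
  rcases hd with rfl | ⟨g, hxy, rfl⟩
  · rw [sum_mul_chi]
    linarith
  · simp only [Pi.sub_apply, Int.cast_sub, mul_sub, Finset.sum_sub_distrib, sum_mul_chi]
    linarith [hg g hxy]

omit [DecidableEq E] in
lemma util_sub_add_util_add (v : (E → ℤ) → ℤ) (P Q : E → ℝ) (x y d : E → ℤ) :
    util v P (x - d) + util v Q (y + d) = util v P x + util v Q y +
      ((v (x - d) + v (y + d) - v x - v y : ℤ) : ℝ) + ∑ k, (P k - Q k) * (d k : ℝ) := by
  simp only [util, Pi.sub_apply, Pi.add_apply, Int.cast_sub, Int.cast_add, mul_sub, mul_add,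
    sub_mul, Finset.sum_sub_distrib, Finset.sum_add_distrib]
  ring

lemma MNatConcave.exists_exchange_util_le (hv : MNatConcave b v) (hbb : b' ≤ b)
    (hx : x ∈ Box b) (hy : y ∈ Box b') (he : y e < x e) (hyb : y e < b' e) {P Q : E → ℝ}
    (hPQ : Q e ≤ P e) (hQP : ∀ g, x g < y g → P g ≤ Q g) :
    ∃ d, x - d ∈ Box b ∧ y + d ∈ Box b' ∧ l1 (x - y - d) < l1 (x - y) ∧
      util v P x + util v Q y ≤ util v P (x - d) + util v Q (y + d) := by
  obtain ⟨d, hd, hval⟩ := hv.exists_exchange hx (box_mono hbb hy) he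
  obtain ⟨hxd, hyd⟩ := hd.mem_box hbb hx hy he hyb
  refine ⟨d, hxd, hyd, hd.l1_lt he, ?_⟩
  have hval' : (0 : ℝ) ≤ ((v (x - d) + v (y + d) - v x - v y : ℤ) : ℝ) := by
    exact_mod_cast (by omega)
  rw [util_sub_add_util_add]
  linarith [hd.sum_price_nonneg hPQ hQP]

variable {p q : E → ℝ}

lemma exists_demand_l1_lt_of_smaller_supply (hv : MNatConcave b v) (hbb : b' ≤ b)
    (hz : z ∈ Demand b v q) (hy : y ∈ Demand b' v p) (he : y e < z e) (hyb : y e < b' e)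
    (hpq : p e ≤ q e) (hqp : ∀ g, z g < y g → q g ≤ p g) :
    ∃ z' ∈ Demand b v q, l1 (z' - y) < l1 (z - y) := by
  obtain ⟨d, hzd, hyd, hl1, hutil⟩ :=
    hv.exists_exchange_util_le hbb hz.1 hy.1 he hyb hpq hqp
  have hy_opt := hy.2 (y + d) hyd
  refine ⟨z - d, ⟨hzd, fun w hw => (hz.2 w hw).trans (by linarith)⟩, ?_⟩
  rwa [sub_right_comm]

lemma exists_demand_l1_lt_of_larger_supply (hv : MNatConcave b v) (hbb : b' ≤ b)
    (hx : x ∈ Demand b v p) (hz : z ∈ Demand b' v q) (he : z e < x e) (hzb : z e < b' e)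
    (hqp : q e ≤ p e) (hpq : ∀ g, x g < z g → p g ≤ q g) :
    ∃ z' ∈ Demand b' v q, l1 (x - z') < l1 (x - z) := by
  obtain ⟨d, hxd, hzd, hl1, hutil⟩ :=
    hv.exists_exchange_util_le hbb hx.1 hz.1 he hzb hqp hpq
  have hx_opt := hx.2 (x - d) hxd
  refine ⟨z + d, ⟨hzd, fun w hw => (hz.2 w hw).trans (by linarith)⟩, ?_⟩
  rwa [sub_add_eq_sub_sub]

end Exchange

section Market

variable {N : Type*} [Fintype N]

omit [DecidableEq E] in
lemma sum_util_eq_sum_util_add (v : N → (E → ℤ) → ℤ) (P Q : E → ℝ) (w : N → E → ℤ) :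
    ∑ i, util (v i) Q (w i) =
      ∑ i, util (v i) P (w i) + ∑ f, (P f - Q f) * ((∑ i, w i f : ℤ) : ℝ) := by
  simp only [util, Int.cast_sum, Finset.mul_sum, sub_mul, Finset.sum_sub_distrib]
  rw [Finset.sum_comm (f := fun f i => P f * (w i f : ℝ)),
    Finset.sum_comm (f := fun f i => Q f * (w i f : ℝ))]
  ring

omit [DecidableEq E] in
lemma walrasian_of_price_change_against_excess {s : E → ℤ} {v : N → (E → ℤ) → ℤ} {P Q : E → ℝ}
    {w z : N → E → ℤ} (hw : ∀ i, w i ∈ Demand s (v i) P) (hws : ∀ f, ∑ i, w i f = s f)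
    (hz : ∀ i, z i ∈ Demand s (v i) Q)
    (hexcess : ∀ f, (P f - Q f) * ((∑ i, z i f - s f : ℤ) : ℝ) ≤ 0) :
    Walrasian s v Q := by
  have hsum : ∑ i, util (v i) Q (z i) ≤ ∑ i, util (v i) Q (w i) := by
    rw [sum_util_eq_sum_util_add v P Q z, sum_util_eq_sum_util_add v P Q w]
    have hP : ∑ i, util (v i) P (z i) ≤ ∑ i, util (v i) P (w i) :=
      Finset.sum_le_sum fun i _ => (hw i).2 _ (hz i).1
    have hprice : ∑ f, (P f - Q f) * ((∑ i, z i f : ℤ) : ℝ) ≤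
        ∑ f, (P f - Q f) * ((∑ i, w i f : ℤ) : ℝ) :=
      Finset.sum_le_sum fun f _ => by
        have := hexcess f
        rw [hws f]
        push_cast at this ⊢
        linarith
    linarith
  have hopt : ∀ i ∈ univ, util (v i) Q (w i) = util (v i) Q (z i) :=
    (Finset.sum_eq_sum_iff_of_le fun i _ => (hz i).2 _ (hw i).1).1
      (le_antisymm (Finset.sum_le_sum fun i _ => (hz i).2 _ (hw i).1) hsum)
  exact ⟨w, fun i => ⟨(hw i).1, fun y hy => ((hz i).2 y hy).trans (hopt i (mem_univ i)).ge⟩, hws⟩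

lemma exists_lt_and_lt_of_sum_lt {y z : N → ℤ} {c d : ℤ} (hy : ∀ i, 0 ≤ y i)
    (hys : ∑ i, y i = c) (hc : 0 < c) (hz : ∀ i, z i ≤ d) (hcd : c ≤ d) (hzs : d < ∑ i, z i) :
    ∃ j, y j < z j ∧ y j < c := by
  classical
  by_contra! hfull
  obtain ⟨j, -, hj⟩ := Finset.exists_lt_of_sum_lt (s := univ) (hys ▸ hcd.trans_lt hzs)
  have hyj : y j = c := le_antisymm (hys ▸ Finset.single_le_sum (fun i _ => hy i) (mem_univ j))
    (hfull j hj)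
  have hrest : ∀ i ∈ univ.erase j, z i ≤ y i := fun i hi => by
    by_contra! hi'
    have := Finset.add_le_sum (fun k _ => hy k) (mem_univ i) (mem_univ j) (ne_of_mem_erase hi)
    linarith [hfull i hi']
  have := Finset.sum_le_sum hrest
  rw [← Finset.add_sum_erase _ _ (mem_univ j)] at hys hzs
  linarith [hz j]

variable {b b' : E → ℤ} {v : N → (E → ℤ) → ℤ} {p p' : E → ℝ}

lemma walrasian_min_prices (hb' : 0 ≤ b') (hbb : b' ≤ b) (hv : ∀ i, MNatConcave b (v i))
    (hw : Walrasian b v p) (hw' : Walrasian b' v p') :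
    Walrasian b v (fun f => if 0 < b' f then min (p f) (p' f) else p f) := by
  obtain ⟨x, hx, hxs⟩ := hw
  obtain ⟨y, hy, hys⟩ := hw'
  set q : E → ℝ := fun f => if 0 < b' f then min (p f) (p' f) else p f with hq
  choose z hz hzmin using fun i => Set.exists_min_image _ (fun w => l1 (w - y i))
    (demand_finite b (v i) q) (demand_nonempty (hb'.trans hbb) (v i) q)
  refine walrasian_of_price_change_against_excess hx hxs hz fun f => ?_
  by_cases hf : 0 < b' f ∧ p' f < p f
  · have hqf : q f = p' f := by simp [hq, hf.1, hf.2.le]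
    suffices ∑ i, z i f ≤ b f by
      push_cast
      exact mul_nonpos_of_nonneg_of_nonpos (by linarith [hf.2]) (by exact_mod_cast (by omega))
    by_contra! hover
    obtain ⟨j, hjz, hjb⟩ := exists_lt_and_lt_of_sum_lt (fun i => ((hy i).1 f).1) (hys f) hf.1
      (fun i => ((hz i).1 f).2) (hbb f) hover
    have hqg : ∀ g, z j g < y j g → q g ≤ p' g := fun g hg => by
      have : 0 < b' g := by linarith [((hz j).1 g).1, ((hy j).1 g).2]
      simp [hq, this]
    obtain ⟨z', hz', hlt⟩ :=
      exists_demand_l1_lt_of_smaller_supply (hv j) hbb (hz j) (hy j) hjz hjb hqf.ge hqg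
    exact (hzmin j z' hz').not_gt hlt
  · have hqf : q f = p f := by
      simp only [hq]
      split_ifs with h
      · exact min_eq_left (not_lt.1 fun h' => hf ⟨h, h'⟩)
      · rfl
    simp [hqf]

lemma walrasian_max_prices (hb' : 0 ≤ b') (hbb : b' ≤ b) (hv : ∀ i, MNatConcave b (v i))
    (hw : Walrasian b v p) (hw' : Walrasian b' v p') :
    Walrasian b' v (fun f => if 0 < b' f then max (p f) (p' f) else p' f) := by
  obtain ⟨x, hx, hxs⟩ := hw
  obtain ⟨y, hy, hys⟩ := hw'
  set r : E → ℝ := fun f => if 0 < b' f then max (p f) (p' f) else p' f with hr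
  choose z hz hzmin using fun i => Set.exists_min_image _ (fun w => l1 (x i - w))
    (demand_finite b' (v i) r) (demand_nonempty hb' (v i) r)
  refine walrasian_of_price_change_against_excess hy hys hz fun f => ?_
  by_cases hf : 0 < b' f ∧ p' f < p f
  · have hrf : r f = p f := by simp [hr, hf.1, hf.2.le]
    suffices b' f ≤ ∑ i, z i f by
      push_cast
      exact mul_nonpos_of_nonpos_of_nonneg (by linarith [hf.2]) (by exact_mod_cast (by omega))
    by_contra! hunder
    obtain ⟨j, -, hj⟩ := Finset.exists_lt_of_sum_lt (s := univ)
      (hunder.trans_le ((hbb f).trans (hxs f).ge))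
    have hjb : z j f < b' f :=
      (Finset.single_le_sum (fun i _ => ((hz i).1 f).1) (mem_univ j)).trans_lt hunder
    have hrg : ∀ g, x j g < z j g → p g ≤ r g := fun g hg => by
      have : 0 < b' g := by linarith [((hx j).1 g).1, ((hz j).1 g).2]
      simp [hr, this]
    obtain ⟨z', hz', hlt⟩ :=
      exists_demand_l1_lt_of_larger_supply (hv j) hbb (hx j) (hz j) hj hjb hrf.le hrg
    exact (hzmin j z' hz').not_gt hlt
  · have hrf : r f = p' f := by
      simp only [hr]
      split_ifs with h
      · exact max_eq_right (not_lt.1 fun h' => hf ⟨h, h'⟩)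
      · rfl
    simp [hrf]

end Market

theorem stmt18_general {N : Type*} [Fintype N] (b b' : E → ℤ)
    (hb' : 0 ≤ b') (hbb : b' ≤ b)
    (v : N → (E → ℤ) → ℤ) (hsgs : ∀ i, MNatConcave b (v i)) :
    -- minimal Walrasian prices
    (∀ p p' : E → ℝ, 0 ≤ p → 0 ≤ p' →
      Walrasian b v p → (∀ r : E → ℝ, 0 ≤ r → Walrasian b v r → p ≤ r) →
      Walrasian b' v p' → (∀ r : E → ℝ, 0 ≤ r → Walrasian b' v r → p' ≤ r) →
      ∀ e : E, 0 < b' e → p e ≤ p' e) ∧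
    -- maximal Walrasian prices
    (∀ p p' : E → ℝ, 0 ≤ p → 0 ≤ p' →
      Walrasian b v p → (∀ r : E → ℝ, 0 ≤ r → Walrasian b v r → r ≤ p) →
      Walrasian b' v p' → (∀ r : E → ℝ, 0 ≤ r → Walrasian b' v r → r ≤ p') →
      ∀ e : E, 0 < b' e → p e ≤ p' e) := by
  refine ⟨fun p p' hp hp' hw hp_min hw' _ e he => ?_,
    fun p p' hp hp' hw _ hw' hp'_max e he => ?_⟩
  · have hq : (0 : E → ℝ) ≤ fun f => if 0 < b' f then min (p f) (p' f) else p f := fun f => by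
      dsimp only
      split_ifs
      exacts [le_min (hp f) (hp' f), hp f]
    have := hp_min _ hq (walrasian_min_prices hb' hbb hsgs hw hw') e
    simp only [he, if_true, le_min_iff] at this
    exact this.2
  · have hr : (0 : E → ℝ) ≤ fun f => if 0 < b' f then max (p f) (p' f) else p' f := fun f => by
      dsimp only
      split_ifs
      exacts [(hp f).trans (le_max_left _ _), hp' f]
    have := hp'_max _ hr (walrasian_max_prices hb' hbb hsgs hw hw') e
    simp only [he, if_true, max_le_iff] at this
    exact this.1

/-- Monotonicity in supply: if the supply decreases from `b` to `b' ≤ b`, both the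
minimal and the maximal Walrasian prices can only increase on the remaining items. -/
theorem stmt18 {N : Type*} [Fintype N] (b b' : E → ℤ)
    (hb' : 0 ≤ b') (hbb : b' ≤ b)
    (v : N → (E → ℤ) → ℤ) (hsgs : ∀ i, MNatConcave b (v i))
    (hmono : ∀ i, ∀ x ∈ Box b, ∀ y ∈ Box b, x ≤ y → v i x ≤ v i y) :
    -- minimal Walrasian prices
    (∀ p p' : E → ℝ, 0 ≤ p → 0 ≤ p' →
      Walrasian b v p → (∀ r : E → ℝ, 0 ≤ r → Walrasian b v r → p ≤ r) →
      Walrasian b' v p' → (∀ r : E → ℝ, 0 ≤ r → Walrasian b' v r → p' ≤ r) →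
      ∀ e : E, 0 < b' e → p e ≤ p' e) ∧
    -- maximal Walrasian prices
    (∀ p p' : E → ℝ, 0 ≤ p → 0 ≤ p' →
      Walrasian b v p → (∀ r : E → ℝ, 0 ≤ r → Walrasian b v r → r ≤ p) →
      Walrasian b' v p' → (∀ r : E → ℝ, 0 ≤ r → Walrasian b' v r → r ≤ p') →
      ∀ e : E, 0 < b' e → p e ≤ p' e) :=
  stmt18_general b b' hb' hbb v hsgs
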